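/- arXiv:math/0608058 — 2 statements merged into one kernel-verified Lean document; each statement's English description precedes it below -/
import Mathlib

section
/- Define ψ: [0, ∞) → ℝ by ψ(t) = t²/2 + 1/2 for t < 1 and ψ(t) = t for t ≥ 1, and define χ: ℂⁿ → ℝ by χ(z) = ψ(|z|). Then at every point z ∈ ℂⁿ with |z| ≠ 1, the function χ is twice differentiable and its Levi form satisfies L_χ(z; w) ≤ |w|² for all w ∈ ℂⁿ (i.e., i∂∂̄χ ≤ β wherever |z| ≠ 1). -/
open MeasureTheory Complex Metric Set
open scoped ComplexConjugate

noncomputable section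

/-- `ℂⁿ` with the Euclidean norm. -/
abbrev Cn (n : ℕ) := EuclideanSpace ℂ (Fin n)

variable {n : ℕ}

instance : MeasurableSpace (Cn n) := borel _
instance : BorelSpace (Cn n) := ⟨rfl⟩

/-- The Levi form of `φ` at `z` applied to `w`:
`L_φ(z; w) = ¼ (D²φ(z)[w,w] + D²φ(z)[iw,iw])` where `D²φ` is the second real Fréchet
derivative. -/
def LeviForm (φ : Cn n → ℝ) (z w : Cn n) : ℝ :=
  (1 / 4) * (fderiv ℝ (fderiv ℝ φ) z w w +
    fderiv ℝ (fderiv ℝ φ) z (Complex.I • w) (Complex.I • w))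

/-- `Ω` is pseudoconvex: it admits a `C²` exhaustion function with nonnegative Levi form. -/
def Pseudoconvex (Ω : Set (Cn n)) : Prop :=
  ∃ ρ : Cn n → ℝ, ContDiffOn ℝ 2 ρ Ω ∧
    (∀ c : ℝ, IsCompact {z ∈ Ω | ρ z ≤ c}) ∧
    ∀ z ∈ Ω, ∀ w : Cn n, 0 ≤ LeviForm ρ z w

/-- The `j`-th standard basis vector of `ℂⁿ`. -/
def e (n : ℕ) (j : Fin n) : Cn n := EuclideanSpace.single j (1 : ℂ)

/-- The components of `∂̄v`: `(∂̄v)_j = ½(∂v/∂x_j + i ∂v/∂y_j)`. -/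
def dbar (v : Cn n → ℂ) (z : Cn n) (j : Fin n) : ℂ :=
  (1 / 2) * (fderiv ℝ v z (e n j) + Complex.I * fderiv ℝ v z (Complex.I • e n j))

/-- The pointwise squared norm `|f(z)|² = Σ_j |f_j(z)|²` of a `(0,1)`-form. -/
def formNormSq (f : Cn n → Fin n → ℂ) (z : Cn n) : ℝ := ∑ j, ‖f z j‖ ^ 2

/-- A `(0,1)`-form `f` is smooth on `Ω` if each component is. -/
def SmoothFormOn (Ω : Set (Cn n)) (f : Cn n → Fin n → ℂ) : Prop :=
  ∀ j, ContDiffOn ℝ (⊤ : ℕ∞) (fun z => f z j) Ω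

/-- A `(0,1)`-form `f` is `∂̄`-closed on `Ω` if `(∂̄f_j)_k = (∂̄f_k)_j` on `Ω`. -/
def DbarClosedOn (Ω : Set (Cn n)) (f : Cn n → Fin n → ℂ) : Prop :=
  ∀ z ∈ Ω, ∀ j k : Fin n, dbar (fun w => f w j) z k = dbar (fun w => f w k) z j

/-- `v` belongs to the weighted space `L²(Ω, e^{-w})`. -/
def MemL2 (Ω : Set (Cn n)) (w : Cn n → ℝ) (v : Cn n → ℂ) : Prop :=
  AEStronglyMeasurable v (volume.restrict Ω) ∧
  IntegrableOn (fun z => ‖v z‖ ^ 2 * Real.exp (-w z)) Ω volume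

/-- `v` is orthogonal to every holomorphic function in `L²(Ω, e^{-w})`. -/
def OrthToHolo (Ω : Set (Cn n)) (w : Cn n → ℝ) (v : Cn n → ℂ) : Prop :=
  ∀ h : Cn n → ℂ, DifferentiableOn ℂ h Ω → MemL2 Ω w h →
    ∫ z in Ω, v z * conj (h z) * (Real.exp (-w z) : ℂ) = 0

/-- `ψ` is a test function on `Ω`. -/
def IsTestOn (Ω : Set (Cn n)) (ψ : Cn n → ℂ) : Prop :=
  ContDiff ℝ (⊤ : ℕ∞) ψ ∧ HasCompactSupport ψ ∧ tsupport ψ ⊆ Ω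

/-- `∂̄v = f` on `Ω` in the sense of distributions. -/
def DbarEqOn (Ω : Set (Cn n)) (v : Cn n → ℂ) (f : Cn n → Fin n → ℂ) : Prop :=
  ∀ ψ : Cn n → ℂ, IsTestOn Ω ψ → ∀ j : Fin n,
    ∫ z in Ω, v z * dbar ψ z j = -∫ z in Ω, f z j * ψ z

/-- `v` is the `L²(Ω, e^{-w})`-minimal solution of `∂̄v = f`: it solves the equation in the
sense of distributions and is orthogonal to all holomorphic functions in `L²(Ω, e^{-w})`. -/
def MinimalSolution (Ω : Set (Cn n)) (w : Cn n → ℝ) (f : Cn n → Fin n → ℂ) (v : Cn n → ℂ) :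
    Prop :=
  MemL2 Ω w v ∧ DbarEqOn Ω v f ∧ OrthToHolo Ω w v


open scoped RealInnerProductSpace

/-- The real inner product on `ℂⁿ`, bundled as a real-bilinear continuous map. -/
def reInnerSL (n : ℕ) : Cn n →L[ℝ] Cn n →L[ℝ] ℝ := innerSL ℝ

lemma reInnerSL_apply (v w : Cn n) : reInnerSL n v w = ⟪v, w⟫ := rfl

lemma norm_I_smul (w : Cn n) : ‖(Complex.I • w : Cn n)‖ = ‖w‖ := by
  rw [norm_smul, Complex.norm_I, one_mul]

lemma hasFDerivAt_norm' (z : Cn n) (h : z ≠ 0) :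
    HasFDerivAt (fun y : Cn n => ‖y‖) (‖z‖⁻¹ • reInnerSL n z) z := by
  have h2 : (‖z‖) ^ 2 ≠ 0 := pow_ne_zero _ (norm_ne_zero_iff.mpr h)
  have h1 := (Real.hasDerivAt_sqrt h2).comp_hasFDerivAt z (hasFDerivAt_id z).norm_sq
  simp only [Function.comp_def, id_eq] at h1
  have heq : (fun y : Cn n => Real.sqrt (‖y‖ ^ 2)) = fun y => ‖y‖ := by
    funext y; exact Real.sqrt_sq (norm_nonneg y)
  rw [heq] at h1
  refine h1.congr_fderiv ?_
  ext w
  have hs : Real.sqrt (‖z‖ ^ 2) = ‖z‖ := Real.sqrt_sq (norm_nonneg z)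
  simp [hs, reInnerSL_apply]
  ring

/-- Away from the sphere `|z| = 1`, the function `χ(z) = ψ(|z|)` is twice differentiable
and its Levi form satisfies `L_χ(z; w) ≤ |w|²`, i.e. `i∂∂̄χ ≤ β` there. -/
theorem chi_levi_form_le_one
    (ψ : ℝ → ℝ) (hψ : ∀ t : ℝ, 0 ≤ t → ψ t = if t < 1 then t ^ 2 / 2 + 1 / 2 else t)
    (χ : Cn n → ℝ) (hχ : ∀ z : Cn n, χ z = ψ ‖z‖) :
    ∀ z : Cn n, ‖z‖ ≠ 1 →
      (∀ᶠ y in nhds z, DifferentiableAt ℝ χ y) ∧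
      DifferentiableAt ℝ (fderiv ℝ χ) z ∧
      ∀ w : Cn n, LeviForm χ z w ≤ ‖w‖ ^ 2 := by
  intro z hz
  rcases lt_or_gt_of_ne hz with h | h
  · -- case ‖z‖ < 1
    have hg : ∀ y : Cn n, HasFDerivAt (fun y : Cn n => 2⁻¹ * ‖y‖ ^ 2 + 2⁻¹)
        (reInnerSL n y) y := by
      intro y
      have h1 := (((hasFDerivAt_id y).norm_sq).const_mul (2⁻¹ : ℝ)).add_const (2⁻¹ : ℝ)
      refine h1.congr_fderiv ?_
      ext w
      simp [reInnerSL_apply, two_smul]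
      ring
    have hball : Metric.ball (0 : Cn n) 1 ∈ nhds z :=
      isOpen_ball.mem_nhds (mem_ball_zero_iff.mpr h)
    have hloc : ∀ y ∈ Metric.ball (0 : Cn n) 1,
        χ =ᶠ[nhds y] fun u : Cn n => 2⁻¹ * ‖u‖ ^ 2 + 2⁻¹ := by
      intro y hy
      filter_upwards [isOpen_ball.mem_nhds hy] with u hu
      rw [hχ u, hψ _ (norm_nonneg u), if_pos (mem_ball_zero_iff.mp hu)]
      ring
    have hfe : fderiv ℝ χ =ᶠ[nhds z] fun y => reInnerSL n y := by
      filter_upwards [hball] with y hy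
      rw [(hloc y hy).fderiv_eq, (hg y).fderiv]
    refine ⟨?_, ?_, ?_⟩
    · filter_upwards [hball] with y hy
      exact (hg y).differentiableAt.congr_of_eventuallyEq (hloc y hy)
    · exact hfe.differentiableAt_iff.mpr (reInnerSL n).differentiableAt
    · intro w
      have h2 : fderiv ℝ (fderiv ℝ χ) z = reInnerSL n := by
        rw [hfe.fderiv_eq]
        exact (reInnerSL n).fderiv
      rw [LeviForm, h2, reInnerSL_apply, reInnerSL_apply,
        real_inner_self_eq_norm_sq, real_inner_self_eq_norm_sq, norm_I_smul]
      nlinarith [sq_nonneg ‖w‖]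
  · -- case 1 < ‖z‖
    have hz0 : z ≠ 0 := by
      intro hzz; rw [hzz] at h; simp at h; linarith
    have hzn : ‖z‖ ≠ 0 := norm_ne_zero_iff.mpr hz0
    have hSopen : IsOpen {y : Cn n | 1 < ‖y‖} := isOpen_lt continuous_const continuous_norm
    have hballS : {y : Cn n | 1 < ‖y‖} ∈ nhds z := hSopen.mem_nhds h
    have hne : ∀ y : Cn n, 1 < ‖y‖ → y ≠ 0 := by
      intro y hy hyy; rw [hyy] at hy; simp at hy; linarith
    have hloc : ∀ y ∈ {y : Cn n | 1 < ‖y‖}, χ =ᶠ[nhds y] fun u : Cn n => ‖u‖ := by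
      intro y hy
      filter_upwards [hSopen.mem_nhds hy] with u hu
      rw [hχ u, hψ _ (norm_nonneg u), if_neg (not_lt.mpr (le_of_lt hu))]
    have hfe : fderiv ℝ χ =ᶠ[nhds z] fun y => ‖y‖⁻¹ • reInnerSL n y := by
      filter_upwards [hballS] with y hy
      rw [(hloc y hy).fderiv_eq, (hasFDerivAt_norm' y (hne y hy)).fderiv]
    have hc : HasFDerivAt (fun y : Cn n => ‖y‖⁻¹)
        ((-(‖z‖ ^ 2)⁻¹ * ‖z‖⁻¹) • reInnerSL n z) z := by
      have h1 := (hasDerivAt_inv hzn).comp_hasFDerivAt z (hasFDerivAt_norm' z hz0)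
      simp only [Function.comp_def] at h1
      refine h1.congr_fderiv ?_
      ext u
      simp [reInnerSL_apply]
      ring
    have hf : HasFDerivAt (fun y : Cn n => reInnerSL n y) (reInnerSL n) z :=
      (reInnerSL n).hasFDerivAt
    have hG := hc.smul hf
    refine ⟨?_, ?_, ?_⟩
    · filter_upwards [hballS] with y hy
      exact (hasFDerivAt_norm' y (hne y hy)).differentiableAt.congr_of_eventuallyEq
        (hloc y hy)
    · exact hfe.differentiableAt_iff.mpr hG.differentiableAt
    · intro w
      have h2 := hfe.fderiv_eq.trans hG.fderiv
      have hval : ∀ v : Cn n, fderiv ℝ (fderiv ℝ χ) z v v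
          = ‖z‖⁻¹ * ⟪v, v⟫ - (‖z‖ ^ 2)⁻¹ * ‖z‖⁻¹ * (⟪z, v⟫ * ⟪z, v⟫) := by
        intro v
        rw [h2]
        simp only [ContinuousLinearMap.add_apply, ContinuousLinearMap.smul_apply,
          ContinuousLinearMap.smulRight_apply, reInnerSL_apply, smul_eq_mul]
        ring
      rw [LeviForm, hval, hval, real_inner_self_eq_norm_sq,
        real_inner_self_eq_norm_sq, norm_I_smul]
      have hinv1 : ‖z‖⁻¹ ≤ 1 := inv_le_one_of_one_le₀ (le_of_lt h)
      have hinv0 : (0:ℝ) ≤ ‖z‖⁻¹ := inv_nonneg.mpr (norm_nonneg z)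
      have hk : (0:ℝ) ≤ (‖z‖ ^ 2)⁻¹ * ‖z‖⁻¹ := by positivity
      nlinarith [sq_nonneg ‖w‖, mul_nonneg hk (mul_self_nonneg ⟪z, w⟫),
        mul_nonneg hk (mul_self_nonneg ⟪z, (Complex.I • w : Cn n)⟫)]
end
end

section
/- For every n ≥ 1 there is a constant C_n (depending only on n) such that for every r > 0 and every C¹ function v on a neighborhood of the closed ball B̄(0, r) ⊂ ℂⁿ, |v(0)|² ≤ C_n ( r^{−2n} ∫_{B(0,r)} |v|² dλ + r² sup_{B(0,r)} |∂̄v|² ). -/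
open MeasureTheory Complex Metric Set
open scoped ComplexConjugate

noncomputable section

variable {n : ℕ}

lemma coe_smul_Cn (r : ℝ) (x : Cn n) : (r : ℂ) • x = r • x := by
  rw [show (r:ℂ) = r • (1:ℂ) by simp, smul_assoc, one_smul]

lemma csmul_decomp (c : ℂ) (x : Cn n) : c • x = c.re • x + c.im • (Complex.I • x) := by
  rw [← coe_smul_Cn, ← coe_smul_Cn, smul_smul, ← add_smul]
  norm_num [Complex.re_add_im]

lemma conj_eq' (c : ℂ) : (starRingEnd ℂ) c = (c.re : ℂ) - c.im * Complex.I := by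
  apply Complex.ext <;> simp

lemma clm_csmul (T : Cn n →L[ℝ] ℂ) (c : ℂ) (x : Cn n) :
    T (c • x) = c.re * T x + c.im * T (Complex.I • x) := by
  rw [csmul_decomp, map_add, _root_.map_smul, _root_.map_smul, Complex.real_smul, Complex.real_smul]

lemma sum_single_eq (z : Cn n) : ∑ j, (z j) • e n j = z := by
  simpa [EuclideanSpace.basisFun_apply, EuclideanSpace.basisFun_repr, e] using
    (EuclideanSpace.basisFun (Fin n) ℂ).sum_repr z

lemma finrank_Cn : Module.finrank ℝ (Cn n) = 2 * n := by
  have := Module.finrank_mul_finrank ℝ ℂ (Cn n)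
  rw [Complex.finrank_real_complex, finrank_euclideanSpace, Fintype.card_fin] at this
  omega

lemma Q_eq_sum_dbar (v : Cn n → ℂ) (w z : Cn n) :
    (1/2 : ℂ) * (fderiv ℝ v w z + Complex.I * fderiv ℝ v w (Complex.I • z)) =
      ∑ j, (starRingEnd ℂ) (z j) * dbar v w j := by
  set T := fderiv ℝ v w with hT
  have h1 : T z = ∑ j, ((z j).re * T (e n j) + (z j).im * T (Complex.I • e n j)) := by
    conv_lhs => rw [← sum_single_eq z]
    rw [map_sum]
    exact Finset.sum_congr rfl fun j _ => clm_csmul T (z j) (e n j)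
  have h2 : T (Complex.I • z) =
      ∑ j, (-(z j).im * T (e n j) + (z j).re * T (Complex.I • e n j)) := by
    conv_lhs => rw [← sum_single_eq z]
    rw [Finset.smul_sum, map_sum]
    refine Finset.sum_congr rfl fun j _ => ?_
    rw [smul_smul, clm_csmul T (Complex.I * z j) (e n j)]
    simp [Complex.mul_re, Complex.mul_im]
  rw [h1, h2, Finset.mul_sum, ← Finset.sum_add_distrib, Finset.mul_sum]
  refine Finset.sum_congr rfl fun j _ => ?_
  rw [conj_eq']
  show _ = _ * ((1/2 : ℂ) * (T (e n j) + Complex.I * T (Complex.I • e n j)))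
  push_cast
  ring_nf
  rw [Complex.I_sq]
  ring

lemma norm_sum_conj_dbar_le (v : Cn n → ℂ) (w z : Cn n) (M : ℝ)
    (h : formNormSq (dbar v) w ≤ M) :
    ‖∑ j, (starRingEnd ℂ) (z j) * dbar v w j‖ ≤ ‖z‖ * Real.sqrt M := by
  have h1 : ‖∑ j, (starRingEnd ℂ) (z j) * dbar v w j‖ ≤ ∑ j, ‖z j‖ * ‖dbar v w j‖ := by
    refine (norm_sum_le _ _).trans (le_of_eq (Finset.sum_congr rfl fun j _ => ?_))
    rw [norm_mul, RCLike.norm_conj]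
  have h2 : (∑ j, ‖z j‖ * ‖dbar v w j‖) ^ 2 ≤
      (∑ j, ‖z j‖ ^ 2) * (∑ j, ‖dbar v w j‖ ^ 2) :=
    Finset.sum_mul_sq_le_sq_mul_sq _ _ _
  have h3 : ∑ j, ‖z j‖ ^ 2 = ‖z‖ ^ 2 := by
    rw [EuclideanSpace.norm_eq, Real.sq_sqrt (by positivity)]
  have h4 : (∑ j, ‖dbar v w j‖ ^ 2) = formNormSq (dbar v) w := rfl
  have hF0 : (0:ℝ) ≤ formNormSq (dbar v) w :=
    (rfl : formNormSq (dbar v) w = ∑ j, ‖dbar v w j‖ ^ 2) ▸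
      Finset.sum_nonneg fun j _ => by positivity
  have h5 : (∑ j, ‖z j‖ * ‖dbar v w j‖) ^ 2 ≤ ‖z‖ ^ 2 * M := by
    refine h2.trans ?_
    rw [h3, h4]
    nlinarith [sq_nonneg ‖z‖]
  have hs : (0:ℝ) ≤ ∑ j, ‖z j‖ * ‖dbar v w j‖ := by positivity
  calc ‖∑ j, (starRingEnd ℂ) (z j) * dbar v w j‖ ≤ ∑ j, ‖z j‖ * ‖dbar v w j‖ := h1
    _ = Real.sqrt ((∑ j, ‖z j‖ * ‖dbar v w j‖) ^ 2) := (Real.sqrt_sq hs).symm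
    _ ≤ Real.sqrt (‖z‖ ^ 2 * M) := Real.sqrt_le_sqrt h5
    _ = ‖z‖ * Real.sqrt M := by
        rw [Real.sqrt_mul (sq_nonneg _), Real.sqrt_sq (norm_nonneg _)]

/-- Multiplication by a unit complex scalar as a real-linear isometry of `ℂⁿ`. -/
def rotLIE (c : ℂ) (hc : c ≠ 0) (hn : ‖c‖ = 1) : Cn n ≃ₗᵢ[ℝ] Cn n where
  toLinearEquiv := (LinearEquiv.smulOfNeZero ℂ (Cn n) c hc).restrictScalars ℝ
  norm_map' := fun x => by
    show ‖c • x‖ = ‖x‖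
    rw [norm_smul, hn, one_mul]

lemma setIntegral_rotate (f : Cn n → ℂ) (c : ℂ) (hn : ‖c‖ = 1) (r : ℝ) :
    ∫ z in ball (0 : Cn n) r, f (c • z) = ∫ z in ball (0 : Cn n) r, f z := by
  have hc : c ≠ 0 := by intro h; rw [h] at hn; simp at hn
  set rot := rotLIE (n := n) c hc hn with hrot
  have happ : ∀ x : Cn n, rot x = c • x := fun x => rfl
  have hemb : MeasurableEmbedding rot := rot.toHomeomorph.measurableEmbedding
  have hmp : MeasurePreserving rot volume volume := rot.measurePreserving
  have hpre : (rot : Cn n → Cn n) ⁻¹' (ball (0 : Cn n) r) = ball (0 : Cn n) r := by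
    ext x
    simp only [mem_preimage, mem_ball_zero_iff, happ, norm_smul, hn, one_mul]
  calc ∫ z in ball (0 : Cn n) r, f (c • z)
      = ∫ z in (rot : Cn n → Cn n) ⁻¹' (ball (0 : Cn n) r), f (rot z) := by
        rw [hpre]; exact setIntegral_congr_fun measurableSet_ball fun x _ => by rw [happ]
    _ = ∫ z in ball (0 : Cn n) r, f z := hmp.setIntegral_preimage_emb hemb f _

def ee (θ : ℝ) : ℂ := Complex.exp (θ * Complex.I)
def wp (z : Cn n) (s θ : ℝ) : Cn n := ((s : ℂ) * ee θ) • z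
def Ef (v : Cn n → ℂ) (z : Cn n) (s θ : ℝ) : ℂ := fderiv ℝ v (wp z s θ) (ee θ • z)
def Tf (v : Cn n → ℂ) (z : Cn n) (s θ : ℝ) : ℂ :=
  fderiv ℝ v (wp z s θ) (((s : ℂ) * (Complex.I * ee θ)) • z)
def Pf (v : Cn n → ℂ) (z y : Cn n) : ℂ :=
  (1/2) * (fderiv ℝ v y z - Complex.I * fderiv ℝ v y (Complex.I • z))
def Qf (v : Cn n → ℂ) (z y : Cn n) : ℂ :=
  (1/2) * (fderiv ℝ v y z + Complex.I * fderiv ℝ v y (Complex.I • z))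

lemma norm_ee (θ : ℝ) : ‖ee θ‖ = 1 := by
  simp [ee, Complex.norm_exp_ofReal_mul_I]

lemma ee_zero : ee 0 = 1 := by simp [ee]

lemma ee_two_pi : ee (2 * Real.pi) = 1 := by
  rw [ee]; push_cast; exact Complex.exp_two_pi_mul_I

lemma keyE (c A B : ℂ) : (c.re : ℂ) * A + c.im * B =
    c * ((1/2) * (A - Complex.I * B)) + (starRingEnd ℂ) c * ((1/2) * (A + Complex.I * B)) := by
  apply Complex.ext <;>
    simp [Complex.mul_re, Complex.mul_im, Complex.add_re, Complex.add_im, Complex.sub_re,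
      Complex.sub_im, Complex.div_re, Complex.div_im] <;> ring

lemma keyT (s : ℝ) (c A B : ℂ) :
    ((((s:ℂ) * (Complex.I * c)).re : ℂ)) * A + ((((s:ℂ) * (Complex.I * c)).im : ℂ)) * B =
      (s:ℂ) * (Complex.I * (c * ((1/2) * (A - Complex.I * B)) -
        (starRingEnd ℂ) c * ((1/2) * (A + Complex.I * B)))) := by
  apply Complex.ext <;>
    simp [Complex.mul_re, Complex.mul_im, Complex.add_re, Complex.add_im, Complex.sub_re,
      Complex.sub_im, Complex.div_re, Complex.div_im] <;> ring

lemma idE (v : Cn n → ℂ) (z : Cn n) (s θ : ℝ) :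
    Ef v z s θ = ee θ * Pf v z (wp z s θ) + (starRingEnd ℂ) (ee θ) * Qf v z (wp z s θ) := by
  rw [Ef, clm_csmul]; exact keyE _ _ _

lemma idT (v : Cn n → ℂ) (z : Cn n) (s θ : ℝ) :
    Tf v z s θ = (s:ℂ) * (Complex.I * (ee θ * Pf v z (wp z s θ) -
      (starRingEnd ℂ) (ee θ) * Qf v z (wp z s θ))) := by
  rw [Tf, clm_csmul]; exact keyT _ _ _ _

lemma contOn_comp_theta {f : ℝ × ℝ → ℂ} {s : ℝ}
    (hf : ContinuousOn f (Icc (0:ℝ) 1 ×ˢ (univ : Set ℝ))) (hs : s ∈ Icc (0:ℝ) 1) (a b : ℝ) :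
    ContinuousOn (fun θ : ℝ => f (s, θ)) (uIcc a b) := by
  have hc : ContinuousOn (fun θ : ℝ => ((s, θ) : ℝ × ℝ)) (uIcc a b) :=
    (continuous_const.prodMk continuous_id).continuousOn
  exact hf.comp hc fun θ _ => ⟨hs, trivial⟩

lemma contOn_comp_s {f : ℝ × ℝ → ℂ} {θ : ℝ}
    (hf : ContinuousOn f (Icc (0:ℝ) 1 ×ˢ (univ : Set ℝ))) :
    ContinuousOn (fun s : ℝ => f (s, θ)) (Icc (0:ℝ) 1) := by
  have hc : ContinuousOn (fun s : ℝ => ((s, θ) : ℝ × ℝ)) (Icc (0:ℝ) 1) :=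
    (continuous_id.prodMk continuous_const).continuousOn
  exact hf.comp hc fun s hs => ⟨hs, trivial⟩

set_option maxHeartbeats 2000000 in
lemma circle_average_estimate (v : Cn n → ℂ) (U : Set (Cn n)) (hU : IsOpen U)
    (r : ℝ) (hr : 0 < r) (hUb : closedBall (0 : Cn n) r ⊆ U) (hv : ContDiffOn ℝ 1 v U)
    (M : ℝ) (hM : ∀ w ∈ ball (0 : Cn n) r, formNormSq (dbar v) w ≤ M)
    (z : Cn n) (hz : z ∈ ball (0 : Cn n) r) :
    ‖(∫ θ in (0:ℝ)..(2 * Real.pi), v (ee θ • z)) - (2 * Real.pi) • v 0‖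
      ≤ 4 * Real.pi * (r * Real.sqrt M) := by
  have hπ := Real.pi_pos
  set K := r * Real.sqrt M with hK
  have hK0 : 0 ≤ K := mul_nonneg hr.le (Real.sqrt_nonneg M)
  -- membership facts
  have hzr : ‖z‖ < r := mem_ball_zero_iff.mp hz
  have hball : ∀ c : ℂ, ‖c‖ ≤ 1 → c • z ∈ ball (0 : Cn n) r := by
    intro c hc
    rw [mem_ball_zero_iff, norm_smul]
    nlinarith [norm_nonneg z, norm_nonneg c]
  have hwmem : ∀ s θ : ℝ, |s| ≤ 1 → wp z s θ ∈ ball (0 : Cn n) r := by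
    intro s θ hs
    refine hball _ ?_
    rw [norm_mul, norm_ee, mul_one, Complex.norm_real, Real.norm_eq_abs]
    exact hs
  have hUball : ball (0 : Cn n) r ⊆ U := ball_subset_closedBall.trans hUb
  have hdiff : ∀ y ∈ ball (0 : Cn n) r, DifferentiableAt ℝ v y := fun y hy =>
    (hv.differentiableOn one_ne_zero).differentiableAt (hU.mem_nhds (hUball hy))
  have hDcont : ContinuousOn (fderiv ℝ v) U := hv.continuousOn_fderiv_of_isOpen hU le_rfl
  -- Q bound
  have hQb : ∀ y ∈ ball (0 : Cn n) r, ‖Qf v z y‖ ≤ K := by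
    intro y hy
    rw [show Qf v z y = ∑ j, (starRingEnd ℂ) (z j) * dbar v y j from Q_eq_sum_dbar v y z]
    exact (norm_sum_conj_dbar_le v y z M (hM y hy)).trans
      (mul_le_mul_of_nonneg_right hzr.le (Real.sqrt_nonneg M))
  -- continuity of the basic maps
  have hwcont : Continuous (fun p : ℝ × ℝ => wp z p.1 p.2) := by
    apply Continuous.fun_smul _ continuous_const
    exact (Complex.continuous_ofReal.comp continuous_fst).mul
      ((Complex.continuous_exp.comp
        ((Complex.continuous_ofReal.comp continuous_snd).mul continuous_const)))
  have hwmaps : MapsTo (fun p : ℝ × ℝ => wp z p.1 p.2) (Icc (0:ℝ) 1 ×ˢ (univ : Set ℝ)) U :=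
    fun p hp => hUball (hwmem _ _ (abs_le.mpr ⟨by linarith [hp.1.1], hp.1.2⟩))
  have hDwcont : ContinuousOn (fun p : ℝ × ℝ => fderiv ℝ v (wp z p.1 p.2))
      (Icc (0:ℝ) 1 ×ˢ (univ : Set ℝ)) := hDcont.comp hwcont.continuousOn hwmaps
  have hEcont : ContinuousOn (fun p : ℝ × ℝ => Ef v z p.1 p.2)
      (Icc (0:ℝ) 1 ×ˢ (univ : Set ℝ)) := by
    exact hDwcont.clm_apply
      (((Complex.continuous_exp.comp
        ((Complex.continuous_ofReal.comp continuous_snd).mul continuous_const)).smul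
          continuous_const).continuousOn)
  have hTcont : ContinuousOn (fun p : ℝ × ℝ => Tf v z p.1 p.2)
      (Icc (0:ℝ) 1 ×ˢ (univ : Set ℝ)) := by
    refine hDwcont.clm_apply (Continuous.continuousOn ?_)
    apply Continuous.fun_smul _ continuous_const
    exact (Complex.continuous_ofReal.comp continuous_fst).mul
      (continuous_const.mul (Complex.continuous_exp.comp
        ((Complex.continuous_ofReal.comp continuous_snd).mul continuous_const)))
  have h1c : ContinuousOn (fun p : ℝ × ℝ => fderiv ℝ v (wp z p.1 p.2) z)
      (Icc (0:ℝ) 1 ×ˢ (univ : Set ℝ)) := hDwcont.clm_apply continuousOn_const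
  have h2c : ContinuousOn (fun p : ℝ × ℝ => fderiv ℝ v (wp z p.1 p.2) (Complex.I • z))
      (Icc (0:ℝ) 1 ×ˢ (univ : Set ℝ)) := hDwcont.clm_apply continuousOn_const
  have hQcont : ContinuousOn (fun p : ℝ × ℝ => Qf v z (wp z p.1 p.2))
      (Icc (0:ℝ) 1 ×ˢ (univ : Set ℝ)) := by
    simp only [Qf]
    exact continuousOn_const.mul (h1c.add (continuousOn_const.mul h2c))
  have hPcont : ContinuousOn (fun p : ℝ × ℝ => Pf v z (wp z p.1 p.2))
      (Icc (0:ℝ) 1 ×ˢ (univ : Set ℝ)) := by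
    simp only [Pf]
    exact continuousOn_const.mul (h1c.sub (continuousOn_const.mul h2c))
  -- derivative in s
  have hds : ∀ θ : ℝ, ∀ s ∈ Icc (0:ℝ) 1,
      HasDerivAt (fun t : ℝ => v (wp z t θ)) (Ef v z s θ) s := by
    intro θ s hs
    have h1 : HasDerivAt (fun t : ℝ => wp z t θ) (ee θ • z) s := by
      have heq : (fun t : ℝ => wp z t θ) = fun t : ℝ => t • (ee θ • z) := by
        funext t
        show ((t:ℂ) * ee θ) • z = t • (ee θ • z)
        rw [← smul_smul, coe_smul_Cn]
      rw [heq]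
      simpa using (hasDerivAt_id s).smul_const (ee θ • z)
    have h2 : DifferentiableAt ℝ v (wp z s θ) :=
      hdiff _ (hwmem s θ (abs_le.mpr ⟨by linarith [hs.1], hs.2⟩))
    exact h2.hasFDerivAt.comp_hasDerivAt s h1
  -- derivative in θ
  have hdθ : ∀ s : ℝ, |s| ≤ 1 → ∀ θ : ℝ,
      HasDerivAt (fun t : ℝ => v (wp z s t)) (Tf v z s θ) θ := by
    intro s hs θ
    have h0 : HasDerivAt (fun t : ℝ => (t : ℂ)) 1 θ := by
      simpa using (hasDerivAt_id θ).ofReal_comp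
    have h1 : HasDerivAt (fun t : ℝ => ((t : ℂ) * Complex.I)) Complex.I θ := by
      simpa using h0.mul_const Complex.I
    have h2 : HasDerivAt (fun t : ℝ => ee t) (Complex.I * ee θ) θ := by
      have := h1.cexp
      simpa [ee, mul_comm] using this
    have h3 : HasDerivAt (fun t : ℝ => (s : ℂ) * ee t) ((s:ℂ) * (Complex.I * ee θ)) θ :=
      h2.const_mul _
    have h4 : HasDerivAt (fun t : ℝ => wp z s t) (((s:ℂ) * (Complex.I * ee θ)) • z) θ := by
      exact h3.smul_const z
    have h5 : DifferentiableAt ℝ v (wp z s θ) := hdiff _ (hwmem s θ hs)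
    exact h5.hasFDerivAt.comp_hasDerivAt θ h4
  have h2π : (0:ℝ) ≤ 2 * Real.pi := by linarith
  -- interval integrability in s (fixed θ)
  have hEint_s : ∀ θ : ℝ, IntervalIntegrable (fun s => Ef v z s θ) volume 0 1 := by
    intro θ
    refine ContinuousOn.intervalIntegrable ?_
    rw [uIcc_of_le zero_le_one]
    exact contOn_comp_s hEcont
  -- FTC in s
  have hFTC : ∀ θ : ℝ, ∫ s in (0:ℝ)..1, Ef v z s θ = v (ee θ • z) - v 0 := by
    intro θ
    have := intervalIntegral.integral_eq_sub_of_hasDerivAt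
      (fun s hs => hds θ s (by rwa [uIcc_of_le zero_le_one] at hs)) (hEint_s θ)
    rw [this]
    congr 1
    · show v (((1:ℝ) * ee θ : ℂ) • z) = _
      norm_num
    · show v (((0:ℝ) * ee θ : ℂ) • z) = v 0
      norm_num
  -- FTC in θ : the closed-loop integral of Tf vanishes
  have hTint : ∀ s : ℝ, s ∈ Icc (0:ℝ) 1 →
      ∫ θ in (0:ℝ)..(2 * Real.pi), Tf v z s θ = 0 := by
    intro s hsI
    have hs : |s| ≤ 1 := abs_le.mpr ⟨by linarith [hsI.1], hsI.2⟩
    have hint : IntervalIntegrable (fun θ => Tf v z s θ) volume 0 (2 * Real.pi) := by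
      exact (contOn_comp_theta hTcont hsI 0 (2 * Real.pi)).intervalIntegrable
    have := intervalIntegral.integral_eq_sub_of_hasDerivAt
      (fun θ _ => hdθ s hs θ) hint
    rw [this, show wp z s (2 * Real.pi) = wp z s 0 by rw [wp, wp, ee_two_pi, ee_zero], sub_self]
  -- integrability in θ of the P- and Q-terms
  have heec : Continuous ee := by
    exact Complex.continuous_exp.comp (Complex.continuous_ofReal.mul continuous_const)
  have hPQc : ∀ s ∈ Icc (0:ℝ) 1,
      ContinuousOn (fun θ : ℝ => ee θ * Pf v z (wp z s θ)) (uIcc 0 (2 * Real.pi)) ∧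
      ContinuousOn (fun θ : ℝ => (starRingEnd ℂ) (ee θ) * Qf v z (wp z s θ))
        (uIcc 0 (2 * Real.pi)) := by
    intro s hsI
    exact ⟨heec.continuousOn.mul (contOn_comp_theta hPcont hsI 0 (2 * Real.pi)),
      ((Complex.continuous_conj.comp heec).continuousOn).mul
        (contOn_comp_theta hQcont hsI 0 (2 * Real.pi))⟩
  -- the two halves have equal integrals, for 0 < s ≤ 1
  have hsplit : ∀ s ∈ Ioc (0:ℝ) 1,
      (∫ θ in (0:ℝ)..(2 * Real.pi), ee θ * Pf v z (wp z s θ)) =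
      ∫ θ in (0:ℝ)..(2 * Real.pi), (starRingEnd ℂ) (ee θ) * Qf v z (wp z s θ) := by
    intro s hsIoc
    have hsI : s ∈ Icc (0:ℝ) 1 := ⟨hsIoc.1.le, hsIoc.2⟩
    obtain ⟨hPc, hQc⟩ := hPQc s hsI
    have h0 := hTint s hsI
    have h1 : ∫ θ in (0:ℝ)..(2 * Real.pi), Tf v z s θ =
        (s:ℂ) * (Complex.I * ((∫ θ in (0:ℝ)..(2 * Real.pi), ee θ * Pf v z (wp z s θ)) -
          ∫ θ in (0:ℝ)..(2 * Real.pi), (starRingEnd ℂ) (ee θ) * Qf v z (wp z s θ))) := by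
      rw [← intervalIntegral.integral_sub hPc.intervalIntegrable hQc.intervalIntegrable,
        ← intervalIntegral.integral_const_mul, ← intervalIntegral.integral_const_mul]
      exact intervalIntegral.integral_congr fun θ _ => idT v z s θ
    rw [h0] at h1
    have hs0 : (s:ℂ) ≠ 0 := by
      simp only [ne_eq, Complex.ofReal_eq_zero]
      exact ne_of_gt hsIoc.1
    have := (mul_eq_zero.mp h1.symm).resolve_left hs0
    have := (mul_eq_zero.mp this).resolve_left Complex.I_ne_zero
    exact sub_eq_zero.mp this
  -- bound on the inner integral for 0 < s ≤ 1
  have hEb : ∀ s ∈ Ioc (0:ℝ) 1,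
      ‖∫ θ in (0:ℝ)..(2 * Real.pi), Ef v z s θ‖ ≤ 4 * Real.pi * K := by
    intro s hsIoc
    have hsI : s ∈ Icc (0:ℝ) 1 := ⟨hsIoc.1.le, hsIoc.2⟩
    obtain ⟨hPc, hQc⟩ := hPQc s hsI
    have hEeq : ∫ θ in (0:ℝ)..(2 * Real.pi), Ef v z s θ =
        (∫ θ in (0:ℝ)..(2 * Real.pi), ee θ * Pf v z (wp z s θ)) +
        ∫ θ in (0:ℝ)..(2 * Real.pi), (starRingEnd ℂ) (ee θ) * Qf v z (wp z s θ) := by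
      rw [← intervalIntegral.integral_add hPc.intervalIntegrable hQc.intervalIntegrable]
      exact intervalIntegral.integral_congr fun θ _ => idE v z s θ
    have hQint : ‖∫ θ in (0:ℝ)..(2 * Real.pi),
        (starRingEnd ℂ) (ee θ) * Qf v z (wp z s θ)‖ ≤ K * |2 * Real.pi - 0| := by
      refine intervalIntegral.norm_integral_le_of_norm_le_const fun θ _ => ?_
      rw [norm_mul, RCLike.norm_conj, norm_ee, one_mul]
      exact hQb _ (hwmem s θ (abs_le.mpr ⟨by linarith [hsI.1], hsI.2⟩))
    rw [hEeq, hsplit s hsIoc]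
    calc ‖(∫ θ in (0:ℝ)..(2 * Real.pi), (starRingEnd ℂ) (ee θ) * Qf v z (wp z s θ)) +
          ∫ θ in (0:ℝ)..(2 * Real.pi), (starRingEnd ℂ) (ee θ) * Qf v z (wp z s θ)‖
        ≤ K * |2 * Real.pi - 0| + K * |2 * Real.pi - 0| :=
          (norm_add_le _ _).trans (add_le_add hQint hQint)
      _ = 4 * Real.pi * K := by
          rw [sub_zero, _root_.abs_of_nonneg h2π]; ring
  -- Fubini
  haveI hfin1 : IsFiniteMeasure (volume.restrict (Ioc (0:ℝ) 1)) :=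
    ⟨by rw [Measure.restrict_apply_univ]; simp [Real.volume_Ioc]⟩
  haveI hfin2 : IsFiniteMeasure (volume.restrict (Ioc (0:ℝ) (2 * Real.pi))) :=
    ⟨by rw [Measure.restrict_apply_univ]; simp [Real.volume_Ioc]; exact ENNReal.mul_lt_top (by simp) ENNReal.ofReal_lt_top⟩
  have hEcc : ContinuousOn (fun p : ℝ × ℝ => Ef v z p.1 p.2)
      (Icc (0:ℝ) 1 ×ˢ Icc (0:ℝ) (2 * Real.pi)) :=
    hEcont.mono (prod_mono subset_rfl (subset_univ _))
  obtain ⟨C0, hC0⟩ := (isCompact_Icc.prod isCompact_Icc).exists_bound_of_continuousOn hEcc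
  have hprod : Integrable (fun p : ℝ × ℝ => Ef v z p.1 p.2)
      ((volume.restrict (Ioc (0:ℝ) 1)).prod (volume.restrict (Ioc (0:ℝ) (2 * Real.pi)))) := by
    refine Integrable.mono' (integrable_const C0) ?_ ?_
    · rw [Measure.prod_restrict]
      exact (hEcc.mono (prod_mono Ioc_subset_Icc_self Ioc_subset_Icc_self)).aestronglyMeasurable
        (measurableSet_Ioc.prod measurableSet_Ioc)
    · rw [Measure.prod_restrict]
      exact (ae_restrict_mem (measurableSet_Ioc.prod measurableSet_Ioc)).mono fun p hp =>
        hC0 p ⟨Ioc_subset_Icc_self hp.1, Ioc_subset_Icc_self hp.2⟩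
  have hswap : (∫ θ in (0:ℝ)..(2 * Real.pi), ∫ s in (0:ℝ)..1, Ef v z s θ) =
      ∫ s in (0:ℝ)..1, ∫ θ in (0:ℝ)..(2 * Real.pi), Ef v z s θ := by
    rw [intervalIntegral.integral_of_le h2π, intervalIntegral.integral_of_le zero_le_one]
    simp_rw [intervalIntegral.integral_of_le zero_le_one, intervalIntegral.integral_of_le h2π]
    exact (MeasureTheory.integral_integral_swap hprod).symm
  -- continuity of the rotated values in θ
  have hveec : Continuous (fun θ : ℝ => v (ee θ • z)) := by
    refine (hv.continuousOn).comp_continuous (heec.smul continuous_const) fun θ => ?_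
    exact hUball (hball _ (norm_ee θ).le)
  have hmain : (∫ θ in (0:ℝ)..(2 * Real.pi), v (ee θ • z)) - (2 * Real.pi) • v 0 =
      ∫ s in (0:ℝ)..1, ∫ θ in (0:ℝ)..(2 * Real.pi), Ef v z s θ := by
    rw [← hswap]
    have h1 : (∫ θ in (0:ℝ)..(2 * Real.pi), v (ee θ • z)) - (2 * Real.pi) • v 0 =
        ∫ θ in (0:ℝ)..(2 * Real.pi), (v (ee θ • z) - v 0) := by
      rw [intervalIntegral.integral_sub (hveec.intervalIntegrable _ _)
        intervalIntegrable_const, intervalIntegral.integral_const, sub_zero]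
    rw [h1]
    exact intervalIntegral.integral_congr fun θ _ => (hFTC θ).symm
  rw [hmain]
  have hae : ∀ᵐ s ∂volume.restrict (Set.uIoc (0:ℝ) 1),
      ‖∫ θ in (0:ℝ)..(2 * Real.pi), Ef v z s θ‖ ≤ 4 * Real.pi * K := by
    rw [uIoc_of_le zero_le_one]
    exact (ae_restrict_mem measurableSet_Ioc).mono fun s hs => hEb s hs
  calc ‖∫ s in (0:ℝ)..1, ∫ θ in (0:ℝ)..(2 * Real.pi), Ef v z s θ‖
      ≤ |∫ s in (0:ℝ)..1, (4 * Real.pi * K)| :=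
        (intervalIntegral.norm_integral_le_of_norm_le zero_le_one (Filter.Eventually.of_forall fun s hs => hEb s hs) intervalIntegrable_const).trans (le_abs_self _)
    _ = 4 * Real.pi * K := by
        rw [intervalIntegral.integral_const]
        have h4 : (0:ℝ) ≤ 4 * Real.pi * K := by positivity
        simp [_root_.abs_of_nonneg h4]

set_option maxHeartbeats 2000000 in
/-- Pointwise estimate (via the Bochner–Martinelli formula): for every `n ≥ 1` there is a
constant `C_n` such that for every `r > 0` and every `C¹` function `v` on a neighborhood
of the closed ball `B̄(0, r) ⊂ ℂⁿ`,
`|v(0)|² ≤ C_n (r^{-2n} ∫_{B(0,r)} |v|² + r² sup_{B(0,r)} |∂̄v|²)`.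
(The supremum is expressed by quantifying over all upper bounds `M` of `|∂̄v|²` on the
ball.) -/
theorem pointwise_estimate_from_L2_and_dbar (hn : 1 ≤ n) :
    ∃ C > 0, ∀ r : ℝ, 0 < r → ∀ v : Cn n → ℂ,
      (∃ U : Set (Cn n), IsOpen U ∧ closedBall (0 : Cn n) r ⊆ U ∧ ContDiffOn ℝ 1 v U) →
      ∀ M : ℝ, (∀ z ∈ ball (0 : Cn n) r, formNormSq (dbar v) z ≤ M) →
        ‖v 0‖ ^ 2 ≤
          C * ((∫ z in ball (0 : Cn n) r, ‖v z‖ ^ 2) / r ^ (2 * n) + r ^ 2 * M) := by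
  have hπ := Real.pi_pos
  haveI : Nonempty (Fin n) := ⟨⟨0, hn⟩⟩
  haveI : Nontrivial (Cn n) := by
    refine ⟨0, EuclideanSpace.single ⟨0, hn⟩ (1:ℂ), fun h => ?_⟩
    have := congrFun (congrArg (fun (x : Cn n) (j : Fin n) => x j) h) ⟨0, hn⟩
    simp [EuclideanSpace.single_apply] at this
  set c := (volume (ball (0 : Cn n) 1)).toReal with hcdef
  have hc : 0 < c :=
    ENNReal.toReal_pos (measure_ball_pos volume 0 one_pos).ne' measure_ball_lt_top.ne
  refine ⟨2 / c + 8, by positivity, ?_⟩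
  rintro r hr v ⟨U, hU, hUb, hv⟩ M hM
  have h2π : (0:ℝ) ≤ 2 * Real.pi := by linarith
  have hM0 : 0 ≤ M := by
    refine le_trans ?_ (hM 0 (mem_ball_self hr))
    exact (rfl : formNormSq (dbar v) 0 = ∑ j, ‖dbar v 0 j‖ ^ 2) ▸
      Finset.sum_nonneg fun j _ => by positivity
  set K := r * Real.sqrt M with hKdef
  have hK0 : 0 ≤ K := by positivity
  have hK2 : K ^ 2 = r ^ 2 * M := by rw [hKdef, mul_pow, Real.sq_sqrt hM0]
  set A := ∫ z in ball (0 : Cn n) r, ‖v z‖ ^ 2 with hAdef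
  have hA0 : 0 ≤ A := setIntegral_nonneg measurableSet_ball fun z _ => by positivity
  set m := (volume (ball (0 : Cn n) r)).toReal with hmdef
  have hball_lt : volume (ball (0 : Cn n) r) < ⊤ := measure_ball_lt_top
  have hm_pos : 0 < m :=
    ENNReal.toReal_pos (measure_ball_pos volume 0 hr).ne' hball_lt.ne
  have hmeq : m = r ^ (2 * n) * c := by
    have h := Measure.addHaar_ball (volume : Measure (Cn n)) (0 : Cn n) hr.le
    rw [finrank_Cn] at h
    rw [hmdef, h, ENNReal.toReal_mul, ENNReal.toReal_ofReal (by positivity)]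
  -- continuity of v on the closed ball
  have hvc : ContinuousOn v (closedBall (0 : Cn n) r) := hv.continuousOn.mono hUb
  obtain ⟨Cv, hCv⟩ := (isCompact_closedBall (0 : Cn n) r).exists_bound_of_continuousOn hvc
  -- core estimate
  have hcore : ∀ z ∈ ball (0 : Cn n) r,
      ‖(∫ θ in (0:ℝ)..(2 * Real.pi), v (ee θ • z)) - (2 * Real.pi) • v 0‖
        ≤ 4 * Real.pi * K :=
    fun z hz => circle_average_estimate v U hU r hr hUb hv M hM z hz
  set W : Cn n → ℂ := fun z => ∫ θ in (0:ℝ)..(2 * Real.pi), v (ee θ • z) with hWdef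
  -- product integrability on ball × Ioc
  haveI : IsFiniteMeasure (volume.restrict (ball (0 : Cn n) r)) :=
    ⟨by rw [Measure.restrict_apply_univ]; exact hball_lt⟩
  haveI : IsFiniteMeasure (volume.restrict (Ioc (0:ℝ) (2 * Real.pi))) :=
    ⟨by rw [Measure.restrict_apply_univ]; simp [Real.volume_Ioc]; exact ENNReal.mul_lt_top (by simp) ENNReal.ofReal_lt_top⟩
  have heec : Continuous ee :=
    Complex.continuous_exp.comp (Complex.continuous_ofReal.mul continuous_const)
  have hjc : ContinuousOn (fun p : Cn n × ℝ => v (ee p.2 • p.1))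
      (closedBall (0 : Cn n) r ×ˢ (univ : Set ℝ)) := by
    have hsm : Continuous (fun p : Cn n × ℝ => ee p.2 • p.1) :=
      (heec.comp continuous_snd).smul continuous_fst
    refine hvc.comp hsm.continuousOn fun p hp => ?_
    rw [mem_closedBall_zero_iff, norm_smul, norm_ee, one_mul]
    exact mem_closedBall_zero_iff.mp hp.1
  have hprod2 : Integrable (fun p : Cn n × ℝ => v (ee p.2 • p.1))
      ((volume.restrict (ball (0 : Cn n) r)).prod
        (volume.restrict (Ioc (0:ℝ) (2 * Real.pi)))) := by
    refine Integrable.mono' (integrable_const Cv) ?_ ?_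
    · rw [Measure.prod_restrict]
      exact (hjc.mono (prod_mono ball_subset_closedBall (subset_univ _))).aestronglyMeasurable
        (measurableSet_ball.prod measurableSet_Ioc)
    · rw [Measure.prod_restrict]
      refine (ae_restrict_mem (measurableSet_ball.prod measurableSet_Ioc)).mono fun p hp => ?_
      refine hCv _ ?_
      rw [mem_closedBall_zero_iff, norm_smul, norm_ee, one_mul]
      exact (mem_ball_zero_iff.mp hp.1).le
  have hWeq : W = fun z => ∫ θ in Ioc (0:ℝ) (2 * Real.pi), v (ee θ • z) :=
    funext fun z => intervalIntegral.integral_of_le h2π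
  have hWint : IntegrableOn W (ball (0 : Cn n) r) volume := by
    rw [hWeq]; exact hprod2.integral_prod_left
  have hswap2 : ∫ z in ball (0 : Cn n) r, W z =
      (2 * Real.pi) • ∫ z in ball (0 : Cn n) r, v z := by
    rw [hWeq]
    rw [MeasureTheory.integral_integral_swap hprod2]
    have h1 : ∀ θ : ℝ, (∫ z in ball (0 : Cn n) r, v (ee θ • z)) =
        ∫ z in ball (0 : Cn n) r, v z := fun θ => setIntegral_rotate v (ee θ) (norm_ee θ) r
    rw [show (fun θ => ∫ z in ball (0 : Cn n) r, v (ee θ • z)) =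
        (fun _ : ℝ => ∫ z in ball (0 : Cn n) r, v z) from funext h1]
    rw [setIntegral_const, Real.volume_real_Ioc_of_le h2π, sub_zero]
  -- combine
  have hsub : ∫ z in ball (0 : Cn n) r, (W z - (2 * Real.pi) • v 0) =
      (2 * Real.pi) • ((∫ z in ball (0 : Cn n) r, v z) - m • v 0) := by
    rw [integral_sub hWint (integrable_const _), hswap2, setIntegral_const, smul_sub]
    rw [smul_comm]
    rfl
  have hbound : ‖∫ z in ball (0 : Cn n) r, (W z - (2 * Real.pi) • v 0)‖
      ≤ (4 * Real.pi * K) * m :=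
    norm_setIntegral_le_of_norm_le_const hball_lt fun z hz => hcore z hz
  have hkey : ‖(∫ z in ball (0 : Cn n) r, v z) - m • v 0‖ ≤ 2 * K * m := by
    rw [hsub, norm_smul, Real.norm_eq_abs, _root_.abs_of_nonneg h2π] at hbound
    nlinarith [norm_nonneg ((∫ z in ball (0 : Cn n) r, v z) - m • v 0)]
  have hvz : m * ‖v 0‖ ≤ ‖∫ z in ball (0 : Cn n) r, v z‖ + 2 * K * m := by
    have h1 : ‖m • v 0‖ ≤ ‖∫ z in ball (0 : Cn n) r, v z‖ +
        ‖(∫ z in ball (0 : Cn n) r, v z) - m • v 0‖ := by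
      have := norm_sub_le (∫ z in ball (0 : Cn n) r, v z)
        ((∫ z in ball (0 : Cn n) r, v z) - m • v 0)
      rwa [sub_sub_cancel] at this
    rw [norm_smul, Real.norm_eq_abs, _root_.abs_of_nonneg hm_pos.le] at h1
    linarith [hkey]
  set B := ∫ z in ball (0 : Cn n) r, ‖v z‖ with hBdef
  have hB0 : 0 ≤ B := setIntegral_nonneg measurableSet_ball fun z _ => norm_nonneg _
  have hBle : ‖∫ z in ball (0 : Cn n) r, v z‖ ≤ B := norm_integral_le_integral_norm _
  -- Cauchy-Schwarz
  have hCS : B ^ 2 ≤ m * A := by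
    have hpq : Real.HolderConjugate 2 2 := Real.HolderConjugate.two_two
    have hmeas : AEStronglyMeasurable (fun z => ‖v z‖)
        (volume.restrict (ball (0 : Cn n) r)) :=
      ((hvc.mono ball_subset_closedBall).norm).aestronglyMeasurable measurableSet_ball
    have hf2 : MemLp (fun z => ‖v z‖) (ENNReal.ofReal 2)
        (volume.restrict (ball (0 : Cn n) r)) := by
      refine MemLp.of_bound hmeas Cv ?_
      refine (ae_restrict_mem measurableSet_ball).mono fun z hz => ?_
      rw [Real.norm_eq_abs, _root_.abs_of_nonneg (norm_nonneg _)]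
      exact hCv z (ball_subset_closedBall hz)
    have hg2 : MemLp (fun _ : Cn n => (1:ℝ)) (ENNReal.ofReal 2)
        (volume.restrict (ball (0 : Cn n) r)) := memLp_const 1
    have hHolder := MeasureTheory.integral_mul_le_Lp_mul_Lq_of_nonneg hpq
      (Filter.Eventually.of_forall fun z => norm_nonneg (v z))
      (Filter.Eventually.of_forall fun _ => zero_le_one) hf2 hg2
    simp only [mul_one] at hHolder
    have hrw : ∀ x : ℝ, x ^ (2:ℝ) = x ^ 2 := fun x => by
      rw [show (2:ℝ) = ((2:ℕ):ℝ) by norm_num, Real.rpow_natCast]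
    simp only [hrw, one_pow] at hHolder
    have hconst : ∫ _ : Cn n in ball (0 : Cn n) r, (1:ℝ) = m := by
      rw [setIntegral_const, smul_eq_mul, mul_one]; rfl
    rw [hconst] at hHolder
    -- hHolder : B ≤ A ^ (1/2) * m ^ (1/2)
    have hsq : (A ^ ((1:ℝ)/2) * m ^ ((1:ℝ)/2)) ^ 2 = A * m := by
      rw [mul_pow, ← Real.rpow_natCast (A ^ ((1:ℝ)/2)) 2,
        ← Real.rpow_natCast (m ^ ((1:ℝ)/2)) 2, ← Real.rpow_mul hA0, ← Real.rpow_mul hm_pos.le]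
      norm_num
    have := pow_le_pow_left₀ hB0 hHolder 2
    rw [hsq] at this
    linarith [this]
  -- final arithmetic
  have hfinal : ‖v 0‖ ^ 2 * m ≤ 2 * A + 8 * K ^ 2 * m := by
    have h1 : m * ‖v 0‖ ≤ B + 2 * K * m := le_trans hvz (by linarith)
    have h2 : (m * ‖v 0‖) ^ 2 ≤ (B + 2 * K * m) ^ 2 :=
      pow_le_pow_left₀ (by positivity) h1 2
    nlinarith [sq_nonneg (B - 2 * K * m), hCS, hm_pos, sq_nonneg (‖v 0‖), hK0, hB0]
  have hrpow : (0:ℝ) < r ^ (2 * n) := by positivity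
  have h2c : 2 / c * c = 2 := div_mul_cancel₀ 2 hc.ne'
  have hAdiv : A / r ^ (2 * n) * r ^ (2 * n) = A := div_mul_cancel₀ A hrpow.ne'
  refine le_of_mul_le_mul_right ?_ hm_pos
  calc ‖v 0‖ ^ 2 * m ≤ 2 * A + 8 * K ^ 2 * m := hfinal
    _ ≤ (2 / c + 8) * (A / r ^ (2 * n) + r ^ 2 * M) * m := by
        rw [hK2, hmeq]
        have key2 : (2/c+8) * (A / r^(2*n) + r^2*M) * (r^(2*n)*c)
            = 2*A + 2*(r^2*M)*r^(2*n) + 8*A*c + 8*(r^2*M)*(r^(2*n)*c) := by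
          field_simp
          ring
        rw [key2]
        have t1 : (0:ℝ) ≤ 2*(r^2*M)*r^(2*n) := by positivity
        have t2 : (0:ℝ) ≤ 8*A*c := mul_nonneg (mul_nonneg (by norm_num) hA0) hc.le
        linarith
end
end
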